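/- If a flow on a compact metric space Λ has the weak specification property, then Λ contains no attracting critical orbit and no repelling critical orbit (no sinks or sources), provided Λ is not a single critical orbit. -/

import Mathlib

open Filter Set Metric TensorProduct

section Defs
variable {M : Type*}

/-- A continuous flow on a topological space. -/
def IsFlow [TopologicalSpace M] (φ : ℝ → M → M) : Prop :=
  Continuous (fun p : ℝ × M => φ p.1 p.2) ∧ (∀ x, φ 0 x = x) ∧
    ∀ s t x, φ (s + t) x = φ s (φ t x)

def InvariantSet (φ : ℝ → M → M) (Λ : Set M) : Prop :=
  ∀ t : ℝ, ∀ x ∈ Λ, φ t x ∈ Λ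

def orbitOf (φ : ℝ → M → M) (p : M) : Set M := Set.range fun t : ℝ => φ t p

/-- A critical point: singularity or periodic point. -/
def IsCriticalPt (φ : ℝ → M → M) (p : M) : Prop := ∃ T : ℝ, 0 < T ∧ φ T p = p

/-- `K` is a spacing constant for `ε`: any `K`-spaced weak specification
(two orbit segments of points of `Λ`, parametrized over `[a₁,b₁]` and `[a₂,b₂]`
with `a₂ ≥ b₁ + K`) is `ε`-shadowed by a point of `Λ`. -/
def SpecConst [MetricSpace M] (φ : ℝ → M → M) (Λ : Set M) (ε K : ℝ) : Prop :=
  ∀ a₁ b₁ a₂ b₂ : ℝ, a₁ ≤ b₁ → a₂ ≤ b₂ → b₁ + K ≤ a₂ →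
    ∀ x ∈ Λ, ∀ y ∈ Λ, ∃ z ∈ Λ,
      (∀ t ∈ Set.Icc a₁ b₁, dist (φ t z) (φ (t - a₁) x) < ε) ∧
      (∀ t ∈ Set.Icc a₂ b₂, dist (φ t z) (φ (t - a₂) y) < ε)

/-- The weak specification property on `Λ`. -/
def WeakSpec [MetricSpace M] (φ : ℝ → M → M) (Λ : Set M) : Prop :=
  ∀ ε : ℝ, 0 < ε → ∃ K : ℝ, 0 < K ∧ SpecConst φ Λ ε K

/-- Topological mixing of the flow restricted to `Λ`. -/
def TopMixingOn [TopologicalSpace M] (φ : ℝ → M → M) (Λ : Set M) : Prop :=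
  ∀ U V : Set M, IsOpen U → IsOpen V → (U ∩ Λ).Nonempty → (V ∩ Λ).Nonempty →
    ∃ N : ℝ, 0 < N ∧ ∀ t : ℝ, N ≤ t → (φ t '' (V ∩ Λ) ∩ (U ∩ Λ)).Nonempty

/-- Topological transitivity of the flow restricted to `Λ`. -/
def TopTransOn [TopologicalSpace M] (φ : ℝ → M → M) (Λ : Set M) : Prop :=
  ∀ U V : Set M, IsOpen U → IsOpen V → (U ∩ Λ).Nonempty → (V ∩ Λ).Nonempty →
    ∃ t : ℝ, 0 < t ∧ (φ t '' (V ∩ Λ) ∩ (U ∩ Λ)).Nonempty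

/-- The stable set `W^s(σ)` of a point (e.g. a singularity). -/
def WsPoint [TopologicalSpace M] (φ : ℝ → M → M) (σ : M) : Set M :=
  {y | Filter.Tendsto (fun t : ℝ => φ t y) Filter.atTop (nhds σ)}

/-- The unstable set `W^u(σ)` of a point (e.g. a singularity). -/
def WuPoint [TopologicalSpace M] (φ : ℝ → M → M) (σ : M) : Set M :=
  {y | Filter.Tendsto (fun t : ℝ => φ t y) Filter.atBot (nhds σ)}

/-- The strong stable set `W^{ss}(p)`. -/
def Wss [MetricSpace M] (φ : ℝ → M → M) (p : M) : Set M :=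
  {y | Filter.Tendsto (fun t : ℝ => dist (φ t y) (φ t p)) Filter.atTop (nhds 0)}

/-- The strong unstable set `W^{uu}(p)`. -/
def Wuu [MetricSpace M] (φ : ℝ → M → M) (p : M) : Set M :=
  {y | Filter.Tendsto (fun t : ℝ => dist (φ t y) (φ t p)) Filter.atBot (nhds 0)}

/-- The stable set of the orbit of `p`: `W^s(O(p)) = ⋃_t W^{ss}(X_t(p))`. -/
def WsOrb [MetricSpace M] (φ : ℝ → M → M) (p : M) : Set M := ⋃ s : ℝ, Wss φ (φ s p)

/-- The unstable set of the orbit of `p`. -/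
def WuOrb [MetricSpace M] (φ : ℝ → M → M) (p : M) : Set M := ⋃ s : ℝ, Wuu φ (φ s p)

end Defs

section VF
variable {E : Type*} [NormedAddCommGroup E] [NormedSpace ℝ E]

/-- `φ` is the flow generated by the vector field `X`. -/
def GeneratedBy (X : E → E) (φ : ℝ → E → E) : Prop :=
  (∀ x, φ 0 x = x) ∧ (∀ s t x, φ (s + t) x = φ s (φ t x)) ∧
    ∀ x t, HasDerivAt (fun s => φ s x) (X (φ t x)) t

/-- The complexification of a continuous real-linear endomorphism. -/
noncomputable def cxEnd (A : E →L[ℝ] E) : Module.End ℂ (ℂ ⊗[ℝ] E) :=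
  (A : E →ₗ[ℝ] E).baseChange ℂ

/-- A hyperbolic singularity: `X σ = 0` and no eigenvalue of `DX(σ)` has zero real part. -/
def HypSing (X : E → E) (σ : E) : Prop :=
  X σ = 0 ∧ ∀ μ ∈ spectrum ℂ (cxEnd (fderiv ℝ X σ)), μ.re ≠ 0

/-- A hyperbolic periodic point: a regular point of period `T > 0` such that no
characteristic multiplier (eigenvalue of `Dφ_T(p)` other than the simple eigenvalue `1`
coming from the flow direction) lies on the unit circle. -/
def HypPeriodic (X : E → E) (φ : ℝ → E → E) (p : E) : Prop :=
  X p ≠ 0 ∧ ∃ T : ℝ, 0 < T ∧ φ T p = p ∧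
    (∀ μ ∈ spectrum ℂ (cxEnd (fderiv ℝ (φ T) p)), μ = 1 ∨ ‖μ‖ ≠ 1) ∧
    Module.finrank ℂ (Module.End.maxGenEigenspace (cxEnd (fderiv ℝ (φ T) p)) 1) = 1

/-- A hyperbolic critical element: hyperbolic singularity or hyperbolic periodic point. -/
def HypCritical (X : E → E) (φ : ℝ → E → E) (p : E) : Prop :=
  HypSing X p ∨ HypPeriodic X φ p

/-- A hyperbolic periodic orbit of saddle type: it has characteristic multipliers both
inside and outside the unit circle. -/
def IsSaddlePeriodic (X : E → E) (φ : ℝ → E → E) (p : E) : Prop :=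
  X p ≠ 0 ∧ ∃ T : ℝ, 0 < T ∧ φ T p = p ∧
    (∃ μ ∈ spectrum ℂ (cxEnd (fderiv ℝ (φ T) p)), ‖μ‖ < 1) ∧
    (∃ μ ∈ spectrum ℂ (cxEnd (fderiv ℝ (φ T) p)), 1 < ‖μ‖)

/-- `Crit(X)`: singularities together with periodic points. -/
def CritSet (X : E → E) (φ : ℝ → E → E) : Set E :=
  {x | X x = 0 ∨ ∃ T : ℝ, 0 < T ∧ φ T x = x}

/-- `PO(X)`: the (regular) periodic points. -/
def PerPts (X : E → E) (φ : ℝ → E → E) : Set E :=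
  {x | X x ≠ 0 ∧ ∃ T : ℝ, 0 < T ∧ φ T x = x}

end VF

/-- A sink (attracting critical orbit): the orbit of a critical point `p` admitting an
open neighborhood `U` which is forward invariant and whose forward intersection is
exactly the orbit. -/
def IsSinkOrbit {M : Type*} [TopologicalSpace M] (φ : ℝ → M → M) (p : M) : Prop :=
  ∃ U : Set M, IsOpen U ∧ orbitOf φ p ⊆ U ∧ (∀ t : ℝ, 0 ≤ t → φ t '' U ⊆ U) ∧
    (⋂ t : ℝ, ⋂ _ : 0 ≤ t, φ t '' U) = orbitOf φ p

/-- A source (repelling critical orbit): a sink for the time-reversed flow. -/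
def IsSourceOrbit {M : Type*} [TopologicalSpace M] (φ : ℝ → M → M) (p : M) : Prop :=
  ∃ U : Set M, IsOpen U ∧ orbitOf φ p ⊆ U ∧ (∀ t : ℝ, t ≤ 0 → φ t '' U ⊆ U) ∧
    (⋂ t : ℝ, ⋂ _ : t ≤ 0, φ t '' U) = orbitOf φ p

/-! If `O` is a sink with trapping neighbourhood `U`, every point whose backward orbit stays in
`U` lies in `⋂_{t ≥ 0} φ_t(U) = O`. Weak specification produces, for every `n`, a point that
`ε`-shadows `O` during `[-n, 0]` and comes `ε`-close to a fixed point `q ∉ O` at time `K`; by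
compactness some point does so for the whole backward half-line. Its backward orbit stays in
`U`, so its time-`K` image lies on `O`, yet within `ε` of `q`. Sources are sinks of the
reversed flow, which inherits weak specification. -/

section Flow

variable {M : Type*} {φ : ℝ → M → M}

theorem IsFlow.map_zero [TopologicalSpace M] (hflow : IsFlow φ) (x : M) : φ 0 x = x :=
  hflow.2.1 x

theorem IsFlow.map_add [TopologicalSpace M] (hflow : IsFlow φ) (s t : ℝ) (x : M) :
    φ (s + t) x = φ s (φ t x) :=
  hflow.2.2 s t x

theorem IsFlow.continuous_apply [TopologicalSpace M] (hflow : IsFlow φ) (t : ℝ) :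
    Continuous (φ t) :=
  hflow.1.comp (continuous_const.prodMk continuous_id)

theorem IsFlow.continuous_apply_left [TopologicalSpace M] (hflow : IsFlow φ) (x : M) :
    Continuous fun t => φ t x :=
  hflow.1.comp (continuous_id.prodMk continuous_const)

theorem IsCriticalPt.isCompact_orbitOf [TopologicalSpace M] (hflow : IsFlow φ) {p : M}
    (hp : IsCriticalPt φ p) : IsCompact (orbitOf φ p) := by
  obtain ⟨T, hT, hpT⟩ := hp
  have hper : Function.Periodic (fun t => φ t p) T := fun t => by
    simp only [hflow.map_add, hpT]
  exact hper.compact_of_continuous hT.ne' (hflow.continuous_apply_left p)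

/-- Forward invariance makes `t ↦ φ t '' U` antitone on `t ≥ 0`, so a point whose whole
backward orbit lies in `U` lies in all of these images. -/
theorem IsFlow.mem_iInter_image_of_backward_orbit_subset [TopologicalSpace M]
    (hflow : IsFlow φ) {U : Set M} (hfwd : ∀ t : ℝ, 0 ≤ t → φ t '' U ⊆ U) {ζ : M}
    (hback : ∀ t : ℝ, t ≤ 0 → φ t ζ ∈ U) (s : ℝ) :
    φ s ζ ∈ ⋂ t : ℝ, ⋂ _ : 0 ≤ t, φ t '' U := by
  refine mem_iInter₂.2 fun t _ => ⟨φ (s - t) ζ, ?_, ?_⟩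
  · rcases le_or_gt (s - t) 0 with h | h
    · exact hback _ h
    · exact hfwd _ h.le ⟨ζ, by simpa only [hflow.map_zero] using hback 0 le_rfl, rfl⟩
  · rw [← hflow.map_add, add_sub_cancel]

theorem exists_forall_nonpos_mem_of_forall_nat [TopologicalSpace M] [CompactSpace M]
    (hφ : ∀ t, Continuous (φ t)) {F G : Set M} (hF : IsClosed F) (hG : IsClosed G)
    (h : ∀ n : ℕ, ∃ z ∈ G, ∀ t ∈ Icc (-(n : ℝ)) 0, φ t z ∈ F) :
    ∃ ζ ∈ G, ∀ t : ℝ, t ≤ 0 → φ t ζ ∈ F := by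
  set S : ℕ → Set M := fun n => G ∩ ⋂ t ∈ Icc (-(n : ℝ)) 0, φ t ⁻¹' F
  have hS_closed : ∀ n, IsClosed (S n) := fun n =>
    hG.inter (isClosed_biInter fun t _ => hF.preimage (hφ t))
  have hS_anti : ∀ n, S (n + 1) ⊆ S n := fun n =>
    inter_subset_inter_right _ <| biInter_subset_biInter_left <|
      Icc_subset_Icc_left <| by push_cast; linarith
  have hS_ne : ∀ n, (S n).Nonempty := fun n => by
    obtain ⟨z, hzG, hzF⟩ := h n
    exact ⟨z, hzG, mem_iInter₂.2 hzF⟩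
  obtain ⟨ζ, hζ⟩ := IsCompact.nonempty_iInter_of_sequence_nonempty_isCompact_isClosed
    S hS_anti hS_ne (hS_closed 0).isCompact hS_closed
  have hζS : ∀ n, ζ ∈ S n := mem_iInter.1 hζ
  refine ⟨ζ, (hζS 0).1, fun t ht => ?_⟩
  have hn : -((⌈-t⌉₊ : ℕ) : ℝ) ≤ t := by linarith [Nat.le_ceil (-t)]
  exact mem_iInter₂.1 (hζS ⌈-t⌉₊).2 t ⟨hn, ht⟩

end Flow

section Sink

variable {M : Type*} [MetricSpace M] [CompactSpace M] {φ : ℝ → M → M}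

theorem not_isSinkOrbit_of_weakSpec (hflow : IsFlow φ) (hspec : WeakSpec φ univ) {p : M}
    (hp : IsCriticalPt φ p) (hne : (univ : Set M) ≠ orbitOf φ p) : ¬ IsSinkOrbit φ p := by
  rintro ⟨U, hU, hOU, hfwd, hInter⟩
  set O := orbitOf φ p
  have hO : IsCompact O := hp.isCompact_orbitOf hflow
  have hO_ne : O.Nonempty := ⟨p, 0, hflow.map_zero p⟩
  obtain ⟨q, hq⟩ : ∃ q, q ∉ O := by
    by_contra! h
    exact hne (eq_univ_of_forall h).symm
  have hd : 0 < infDist q O := (hO.isClosed.notMem_iff_infDist_pos hO_ne).1 hq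
  obtain ⟨δ, hδ, hδU⟩ := hO.exists_thickening_subset_open hU hOU
  set ε := min (δ / 2) (infDist q O / 2)
  have hε : 0 < ε := lt_min (half_pos hδ) (half_pos hd)
  obtain ⟨K, hK, hspecK⟩ := hspec ε hε
  have hshadow : ∀ n : ℕ, ∃ z ∈ φ K ⁻¹' closedBall q ε,
      ∀ t ∈ Icc (-(n : ℝ)) 0, φ t z ∈ cthickening ε O := fun n => by
    obtain ⟨z, -, hzp, hzq⟩ := hspecK (-n) 0 K K (by simp) le_rfl (by linarith)
      p (mem_univ p) q (mem_univ q)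
    refine ⟨z, ?_, fun t ht => mem_cthickening_of_dist_le _ _ _ _ ⟨_, rfl⟩ (hzp t ht).le⟩
    simpa [hflow.map_zero] using (hzq K ⟨le_rfl, le_rfl⟩).le
  obtain ⟨ζ, hζq, hζO⟩ := exists_forall_nonpos_mem_of_forall_nat hflow.continuous_apply
    isClosed_cthickening (isClosed_closedBall.preimage (hflow.continuous_apply K)) hshadow
  have hζU : ∀ t : ℝ, t ≤ 0 → φ t ζ ∈ U := fun t ht =>
    hδU <| cthickening_subset_thickening' hδ (by linarith [min_le_left (δ / 2) (infDist q O / 2)])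
      O (hζO t ht)
  have hKζ : φ K ζ ∈ O := hInter ▸ hflow.mem_iInter_image_of_backward_orbit_subset hfwd hζU K
  have : infDist q O ≤ ε := (infDist_le_dist_of_mem hKζ).trans (by rw [dist_comm]; exact hζq)
  linarith [min_le_right (δ / 2) (infDist q O / 2)]

end Sink

section Reverse

variable {M : Type*} {φ : ℝ → M → M}

def reverseFlow (φ : ℝ → M → M) : ℝ → M → M := fun t => φ (-t)

@[simp]
theorem reverseFlow_apply (t : ℝ) (x : M) : reverseFlow φ t x = φ (-t) x := rfl

theorem IsFlow.reverseFlow [TopologicalSpace M] (hflow : IsFlow φ) : IsFlow (reverseFlow φ) :=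
  ⟨hflow.1.comp (continuous_fst.neg.prodMk continuous_snd), fun x => by simp [hflow.map_zero],
    fun s t x => by simp only [reverseFlow_apply, neg_add, hflow.map_add]⟩

theorem IsFlow.map_neg_map [TopologicalSpace M] (hflow : IsFlow φ) (t : ℝ) (x : M) :
    φ (-t) (φ t x) = x := by
  rw [← hflow.map_add, neg_add_cancel, hflow.map_zero]

theorem orbitOf_reverseFlow (p : M) : orbitOf (reverseFlow φ) p = orbitOf φ p :=
  (Equiv.neg ℝ).surjective.range_comp fun t => φ t p

theorem IsCriticalPt.reverseFlow [TopologicalSpace M] (hflow : IsFlow φ) {p : M}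
    (hp : IsCriticalPt φ p) : IsCriticalPt (reverseFlow φ) p := by
  obtain ⟨T, hT, hpT⟩ := hp
  exact ⟨T, hT, by simpa [hpT] using hflow.map_neg_map T p⟩

/-- Two segments of the reversed flow are shadowed by reversing a shadowing orbit of the
forward flow, taken over the mirrored time intervals with the two segments swapped. -/
theorem WeakSpec.reverseFlow [MetricSpace M] (hflow : IsFlow φ) {Λ : Set M}
    (hΛ : InvariantSet φ Λ) (hspec : WeakSpec φ Λ) : WeakSpec (reverseFlow φ) Λ := by
  intro ε hε
  obtain ⟨K, hK, hspecK⟩ := hspec ε hε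
  refine ⟨K, hK, fun a₁ b₁ a₂ b₂ h₁ h₂ hgap x hx y hy => ?_⟩
  obtain ⟨z, hz, hzy, hzx⟩ := hspecK (-b₂) (-a₂) (-b₁) (-a₁) (by linarith) (by linarith)
    (by linarith) (φ (a₂ - b₂) y) (hΛ _ y hy) (φ (a₁ - b₁) x) (hΛ _ x hx)
  have hmirror : ∀ a b t : ℝ, ∀ w : M, φ (-t - -b) (φ (a - b) w) = φ (-(t - a)) w :=
    fun a b t w => by rw [← hflow.map_add]; ring_nf
  refine ⟨z, hz, fun t ht => ?_, fun t ht => ?_⟩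
  · simpa only [reverseFlow_apply, hmirror] using hzx (-t) ⟨neg_le_neg ht.2, neg_le_neg ht.1⟩
  · simpa only [reverseFlow_apply, hmirror] using hzy (-t) ⟨neg_le_neg ht.2, neg_le_neg ht.1⟩

theorem IsSourceOrbit.isSinkOrbit_reverseFlow [TopologicalSpace M] {p : M}
    (h : IsSourceOrbit φ p) : IsSinkOrbit (reverseFlow φ) p := by
  obtain ⟨U, hU, hOU, hbwd, hInter⟩ := h
  refine ⟨U, hU, (orbitOf_reverseFlow p).symm ▸ hOU, fun t ht => hbwd (-t) (by linarith), ?_⟩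
  rw [orbitOf_reverseFlow, ← hInter]
  ext x
  simp only [mem_iInter, reverseFlow_apply]
  exact ⟨fun h t ht => neg_neg t ▸ h (-t) (by linarith), fun h t ht => h (-t) (by linarith)⟩

end Reverse

theorem weak_specification_no_sinks_no_sources_general
    {M : Type*} [MetricSpace M] [CompactSpace M]
    (φ : ℝ → M → M) (hflow : IsFlow φ) (hspec : WeakSpec φ Set.univ)
    (hnotsingleorbit : ∀ p : M, IsCriticalPt φ p → (Set.univ : Set M) ≠ orbitOf φ p) :
    ∀ p : M, IsCriticalPt φ p → ¬ IsSinkOrbit φ p ∧ ¬ IsSourceOrbit φ p := by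
  intro p hp
  refine ⟨not_isSinkOrbit_of_weakSpec hflow hspec hp (hnotsingleorbit p hp), fun hsource => ?_⟩
  exact not_isSinkOrbit_of_weakSpec hflow.reverseFlow
    (hspec.reverseFlow hflow fun _ _ _ => mem_univ _) (hp.reverseFlow hflow)
    ((orbitOf_reverseFlow p).symm ▸ hnotsingleorbit p hp) hsource.isSinkOrbit_reverseFlow

/-- If a flow on a compact metric space (not reduced to a single critical
orbit) has the weak specification property, then it has no sinks and no sources. -/
theorem weak_specification_no_sinks_no_sources
    {M : Type*} [MetricSpace M] [CompactSpace M] [Nonempty M]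
    (φ : ℝ → M → M) (hflow : IsFlow φ) (hspec : WeakSpec φ Set.univ)
    (hnotsingleorbit : ∀ p : M, IsCriticalPt φ p → (Set.univ : Set M) ≠ orbitOf φ p) :
    ∀ p : M, IsCriticalPt φ p → ¬ IsSinkOrbit φ p ∧ ¬ IsSourceOrbit φ p :=
  weak_specification_no_sinks_no_sources_general φ hflow hspec hnotsingleorbit
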